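/- Let (U, I) be a matroid on a finite ground set U, and let E : 2^U → ℝ be a set function that is nonincreasing (E(T') ≤ E(T) whenever T ⊆ T' ⊆ U) and α-supermodular for some α > 0. Define the greedy sequence by G^(0) = ∅ and, as long as the set F_r = {e ∈ U \ G^(r) : G^(r) ∪ {e} ∈ I} is nonempty, G^(r+1) = G^(r) ∪ {e_r} where e_r is any minimizer of E(G^(r) ∪ {e}) over e ∈ F_r; let G be the final set when F_r = ∅. Then, with β = min(α/2, α/(1+α)) and E* = min_{T ∈ I} E(T), the greedy output satisfies E(G) ≤ (1 − β) E(∅) + β E*. -/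

import Mathlib

open Finset

/-!
Greedy choice plus `α`-supermodularity bound every later marginal gain by the greedy one: if
`e` is feasible at `G^(r)` and `B ⊇ G^(r)`, then `α (E(B) - E(B ∪ {e})) ≤ E(G^(r)) - E(G^(r+1))`.
For an independent `T` with `|T| = r`, the exchange axiom provides such an `e ∈ T` at step
`r - 1`; removing it and inducting gives `α (E(G) - E(G ∪ T)) ≤ E(∅) - E(G^(r))`. An optimal
`T` has `|T| ≤ |G|` because `G` is maximal, so monotonicity yields
`(1 + α) E(G) ≤ E(∅) + α E*`, and `β ≤ α / (1 + α)`, `E* ≤ E(∅)` finish.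
-/

variable {U : Type*} [DecidableEq U]

def IsSupermodularWith (α : ℝ) (E : Finset U → ℝ) : Prop :=
  ∀ A B : Finset U, A ⊆ B → ∀ e : U, e ∉ B →
    E A - E (insert e A) ≥ α * (E B - E (insert e B))

def IsGreedyStep (Ind : Finset U → Prop) (E : Finset U → ℝ) (S S' : Finset U) : Prop :=
  ∃ e : U, e ∉ S ∧ Ind (insert e S) ∧ S' = insert e S ∧
    ∀ e' : U, e' ∉ S → Ind (insert e' S) → E (insert e S) ≤ E (insert e' S)

def IsGreedyRun (Ind : Finset U → Prop) (E : Finset U → ℝ) (G : ℕ → Finset U) (R : ℕ) : Prop :=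
  ∀ r < R, IsGreedyStep Ind E (G r) (G (r + 1))

variable {Ind : Finset U → Prop} {E : Finset U → ℝ} {α : ℝ}

theorem card_le_of_maximal_indep
    (hexch : ∀ A B : Finset U, Ind A → Ind B → A.card < B.card → ∃ e ∈ B \ A, Ind (insert e A))
    {S T : Finset U} (hS : Ind S) (hmax : ¬ ∃ e : U, e ∉ S ∧ Ind (insert e S)) (hT : Ind T) :
    T.card ≤ S.card := by
  by_contra! hlt
  obtain ⟨e, he, hI⟩ := hexch S T hS hT hlt
  exact hmax ⟨e, (mem_sdiff.mp he).2, hI⟩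

namespace IsGreedyStep

variable {S S' : Finset U}

theorem subset (h : IsGreedyStep Ind E S S') : S ⊆ S' := by
  obtain ⟨e, -, -, rfl, -⟩ := h
  exact subset_insert e S

theorem indep (h : IsGreedyStep Ind E S S') : Ind S' := by
  obtain ⟨e, -, hI, rfl, -⟩ := h
  exact hI

theorem card_eq (h : IsGreedyStep Ind E S S') : S'.card = S.card + 1 := by
  obtain ⟨e, he, -, rfl, -⟩ := h
  exact card_insert_of_notMem he

theorem le_of_indep_insert (h : IsGreedyStep Ind E S S') {e : U} (he : e ∉ S)
    (hI : Ind (insert e S)) : E S' ≤ E (insert e S) := by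
  obtain ⟨g, -, -, rfl, hmin⟩ := h
  exact hmin e he hI

theorem mul_sub_insert_le (h : IsGreedyStep Ind E S S') (hE : Antitone E)
    (hsuper : IsSupermodularWith α E) {B : Finset U} (hSB : S ⊆ B) {e : U} (he : e ∉ S)
    (hI : Ind (insert e S)) : α * (E B - E (insert e B)) ≤ E S - E S' := by
  by_cases heB : e ∈ B
  · rw [insert_eq_of_mem heB, sub_self, mul_zero, sub_nonneg]
    exact hE h.subset
  · calc α * (E B - E (insert e B)) ≤ E S - E (insert e S) := hsuper S B hSB e heB
      _ ≤ E S - E S' := sub_le_sub_left (h.le_of_indep_insert he hI) _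

end IsGreedyStep

namespace IsGreedyRun

variable {G : ℕ → Finset U} {R : ℕ}

theorem mono (hrun : IsGreedyRun Ind E G R) {r s : ℕ} (hrs : r ≤ s) (hs : s ≤ R) :
    G r ⊆ G s := by
  induction s, hrs using Nat.le_induction with
  | base => exact subset_rfl
  | succ n _ ih => exact (ih (by omega)).trans (hrun n (by omega)).subset

theorem indep_card (hrun : IsGreedyRun Ind E G R) (h0 : Ind ∅) (hG0 : G 0 = ∅) :
    ∀ r ≤ R, Ind (G r) ∧ (G r).card = r := by
  intro r
  induction r with
  | zero => simp [hG0, h0]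
  | succ n ih =>
    intro hn
    have hstep := hrun n (by omega)
    exact ⟨hstep.indep, by rw [hstep.card_eq, (ih (by omega)).2]⟩

theorem mul_sub_union_le (hrun : IsGreedyRun Ind E G R) (h0 : Ind ∅) (hG0 : G 0 = ∅)
    (hdown : ∀ A B : Finset U, A ⊆ B → Ind B → Ind A)
    (hexch : ∀ A B : Finset U, Ind A → Ind B → A.card < B.card → ∃ e ∈ B \ A, Ind (insert e A))
    (hE : Antitone E) (hsuper : IsSupermodularWith α E) :
    ∀ r ≤ R, ∀ T : Finset U, Ind T → T.card = r →
      α * (E (G R) - E (G R ∪ T)) ≤ E ∅ - E (G r) := by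
  intro r
  induction r with
  | zero =>
    intro _ T _ hT
    simp [card_eq_zero.mp hT, hG0]
  | succ n ih =>
    intro hn T hT hcard
    obtain ⟨hGn, hGncard⟩ := hrun.indep_card h0 hG0 n (by omega)
    obtain ⟨e, he, hI⟩ := hexch (G n) T hGn hT (by omega)
    obtain ⟨heT, heG⟩ := mem_sdiff.mp he
    have hprev := ih (by omega) (T.erase e) (hdown _ T (erase_subset e T) hT)
      (by rw [card_erase_of_mem heT, hcard]; rfl)
    have hlast := (hrun n (by omega)).mul_sub_insert_le hE hsuper
      (B := G R ∪ T.erase e) ((hrun.mono (by omega) le_rfl).trans subset_union_left) heG hI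
    rw [← union_insert, insert_erase heT] at hlast
    linarith

end IsGreedyRun

theorem le_one_sub_mul_add_mul_of_one_add_mul_le {α β x a b : ℝ} (hα : 0 < α)
    (hβ : β ≤ α / (1 + α)) (hba : b ≤ a) (hx : (1 + α) * x ≤ a + α * b) :
    x ≤ (1 - β) * a + β * b := by
  have h1α : 0 < 1 + α := by linarith
  calc x ≤ (a + α * b) / (1 + α) := (le_div_iff₀' h1α).mpr hx
    _ = a - α / (1 + α) * (a - b) := by field_simp; ring
    _ ≤ a - β * (a - b) := by gcongr
    _ = (1 - β) * a + β * b := by ring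

theorem stmt_6 {U : Type} [DecidableEq U]
    (Ind : Finset U → Prop)
    (hIdown : ∀ A B : Finset U, A ⊆ B → Ind B → Ind A)
    (hIexch : ∀ A B : Finset U, Ind A → Ind B → A.card < B.card →
      ∃ e ∈ B \ A, Ind (insert e A))
    (E : Finset U → ℝ)
    (hmono : ∀ T T' : Finset U, T ⊆ T' → E T' ≤ E T)
    (α : ℝ) (hα : 0 < α)
    (hsuper : ∀ A B : Finset U, A ⊆ B → ∀ e : U, e ∉ B →
      E A - E (insert e A) ≥ α * (E B - E (insert e B)))
    (G : ℕ → Finset U) (hG0 : G 0 = ∅) (R : ℕ)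
    (hrun : ∀ r < R, ∃ e : U, e ∉ G r ∧ Ind (insert e (G r)) ∧
      G (r + 1) = insert e (G r) ∧
      ∀ e' : U, e' ∉ G r → Ind (insert e' (G r)) →
        E (insert e (G r)) ≤ E (insert e' (G r)))
    (hstop : ¬ ∃ e : U, e ∉ G R ∧ Ind (insert e (G R)))
    (Estar : ℝ) (hEstar : IsLeast {x : ℝ | ∃ T : Finset U, Ind T ∧ E T = x} Estar) :
    E (G R) ≤ (1 - min (α / 2) (α / (1 + α))) * E ∅
      + min (α / 2) (α / (1 + α)) * Estar := by
  have hE : Antitone E := hmono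
  have hrun : IsGreedyRun Ind E G R := hrun
  obtain ⟨T, hT, rfl⟩ := hEstar.1
  have h0 : Ind ∅ := hIdown ∅ T (empty_subset T) hT
  obtain ⟨hGR, hGRcard⟩ := hrun.indep_card h0 hG0 R le_rfl
  have hTR : T.card ≤ R := hGRcard ▸ card_le_of_maximal_indep hIexch hGR hstop hT
  have hgain := hrun.mul_sub_union_le h0 hG0 hIdown hIexch hE hsuper T.card hTR T hT rfl
  have hGT : E (G R) ≤ E (G T.card) := hE (hrun.mono hTR le_rfl)
  have hunion : α * E (G R ∪ T) ≤ α * E T := by gcongr; exact hE subset_union_right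
  refine le_one_sub_mul_add_mul_of_one_add_mul_le hα (min_le_right _ _)
    (hEstar.2 ⟨∅, h0, rfl⟩) ?_
  linarith
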